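/- If λ and μ are distinct m-partitions of length n, then the representations V_λ and V_μ of H(m,1,n) are not isomorphic as H(m,1,n)-modules. -/

import Mathlib

/-!
The Jucys–Murphy element `J_k` acts on the tableau basis of `V_λ` diagonally, `J_k X = c(X|k) X`:
this follows by induction from `J_{k+1} = σ_k J_k σ_k`, the quadratic relation forcing
`c(X|k) ≠ c(X|k+1)`. An isomorphism `V_λ ≅ V_μ` commutes with every `J_k`, so it sends a tableau
`X` of shape `λ` to a vector whose support contains a tableau `Y` of shape `μ` with the same
contents as `X`.

Under the semisimplicity conditions a standard tableau is determined by its contents. If `X` and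
`Y` agree on the entries before `t`, the nodes of `t` in `X` and in `Y` are addable to the same
shape, and counting the nodes to the left of one and above the other bounds the difference `d` of
their diagonals by `n`. In different diagrams `q^{2d} v_j ≠ v_k` separates the contents. In one
diagram neither node dominates the other, so `d ≠ 0`, and `q^{2d} ≠ 1` because
`1 + q² + ⋯ + q^{2N} ≠ 0` for `N < n`, unless `q² = 1`. In that case all contents within a diagram
coincide, so consecutive entries never share a diagram; then every adjacent transposition of a
standard tableau is again standard, any entry can be moved to the first position, and so every
node is the corner of its diagram.
-/

/-- Generators of the cyclotomic Hecke algebra `H(m,1,n)`: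
`tau` and `sig i` (representing `σ_{i+1}`) for `i : Fin (n-1)`. -/
inductive CycGen (n : ℕ) : Type
  | tau : CycGen n
  | sig : Fin (n - 1) → CycGen n

/-- The defining relations of the cyclotomic Hecke algebra `H(m,1,n)` with
parameters `q`, `qinv` (playing the role of `q⁻¹`) and `v : Fin m → R`. -/
inductive cycRel (R : Type) [CommRing R] (m n : ℕ) (q qinv : R) (v : Fin m → R) :
    FreeAlgebra R (CycGen n) → FreeAlgebra R (CycGen n) → Prop
  | braid (i j : Fin (n - 1)) (h : (j : ℕ) = (i : ℕ) + 1) :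
      cycRel R m n q qinv v
        (FreeAlgebra.ι R (CycGen.sig i) * FreeAlgebra.ι R (CycGen.sig j) *
          FreeAlgebra.ι R (CycGen.sig i))
        (FreeAlgebra.ι R (CycGen.sig j) * FreeAlgebra.ι R (CycGen.sig i) *
          FreeAlgebra.ι R (CycGen.sig j))
  | comm (i j : Fin (n - 1)) (h : (i : ℕ) + 1 < (j : ℕ)) :
      cycRel R m n q qinv v
        (FreeAlgebra.ι R (CycGen.sig i) * FreeAlgebra.ι R (CycGen.sig j))
        (FreeAlgebra.ι R (CycGen.sig j) * FreeAlgebra.ι R (CycGen.sig i))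
  | tauSigma (i : Fin (n - 1)) (h : (i : ℕ) = 0) :
      cycRel R m n q qinv v
        (FreeAlgebra.ι R CycGen.tau * FreeAlgebra.ι R (CycGen.sig i) *
          FreeAlgebra.ι R CycGen.tau * FreeAlgebra.ι R (CycGen.sig i))
        (FreeAlgebra.ι R (CycGen.sig i) * FreeAlgebra.ι R CycGen.tau *
          FreeAlgebra.ι R (CycGen.sig i) * FreeAlgebra.ι R CycGen.tau)
  | tauComm (i : Fin (n - 1)) (h : 0 < (i : ℕ)) :
      cycRel R m n q qinv v
        (FreeAlgebra.ι R CycGen.tau * FreeAlgebra.ι R (CycGen.sig i))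
        (FreeAlgebra.ι R (CycGen.sig i) * FreeAlgebra.ι R CycGen.tau)
  | quadratic (i : Fin (n - 1)) :
      cycRel R m n q qinv v
        (FreeAlgebra.ι R (CycGen.sig i) * FreeAlgebra.ι R (CycGen.sig i))
        ((q - qinv) • FreeAlgebra.ι R (CycGen.sig i) + 1)
  | cyclotomic :
      cycRel R m n q qinv v
        ((List.ofFn (fun k : Fin m =>
            FreeAlgebra.ι R CycGen.tau - algebraMap R (FreeAlgebra R (CycGen n)) (v k))).prod)
        0

/-- The cyclotomic Hecke algebra `H(m,1,n)`. -/
abbrev CycHecke (R : Type) [CommRing R] (m n : ℕ) (q qinv : R) (v : Fin m → R) : Type :=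
  RingQuot (cycRel R m n q qinv v)

variable (R : Type) [CommRing R] (m n : ℕ) (q qinv : R) (v : Fin m → R)

/-- The generator `τ` of `H(m,1,n)`. -/
noncomputable def tauH : CycHecke R m n q qinv v :=
  RingQuot.mkAlgHom R (cycRel R m n q qinv v) (FreeAlgebra.ι R CycGen.tau)

/-- The generator `σ_{i+1}` of `H(m,1,n)`, for `i : Fin (n-1)`. -/
noncomputable def sigH (i : Fin (n - 1)) : CycHecke R m n q qinv v :=
  RingQuot.mkAlgHom R (cycRel R m n q qinv v) (FreeAlgebra.ι R (CycGen.sig i))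

/-- The generator `σ_{k+1}` of `H(m,1,n)`, for `k : ℕ` (defined as `1` out of range). -/
noncomputable def sigN (k : ℕ) : CycHecke R m n q qinv v :=
  if h : k < n - 1 then sigH R m n q qinv v ⟨k, h⟩ else 1

/-- The inverse `σ_{k+1}⁻¹ = σ_{k+1} - (q - q⁻¹)` of the generator `σ_{k+1}`. -/
noncomputable def sigInvN (k : ℕ) : CycHecke R m n q qinv v :=
  sigN R m n q qinv v k - algebraMap R (CycHecke R m n q qinv v) (q - qinv)

/-- `leftW j = σ_j⁻¹ σ_{j-1}⁻¹ ⋯ σ_1⁻¹` (with `leftW 0 = 1`). -/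
noncomputable def leftW : ℕ → CycHecke R m n q qinv v
  | 0 => 1
  | j + 1 => sigInvN R m n q qinv v j * leftW j

/-- `rW k = σ_1 σ_2 ⋯ σ_k` (with `rW 0 = 1`). -/
noncomputable def rW : ℕ → CycHecke R m n q qinv v
  | 0 => 1
  | k + 1 => rW k * sigN R m n q qinv v k

/-- The Jucys–Murphy elements: `JM k` is the element `J_{k+1}` of the paper, so
`JM 0 = τ` and `JM (k+1) = σ_{k+1} (JM k) σ_{k+1}`. -/
noncomputable def JM : ℕ → CycHecke R m n q qinv v
  | 0 => tauH R m n q qinv v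
  | k + 1 => sigN R m n q qinv v k * JM k * sigN R m n q qinv v k
/-- The semisimplicity conditions (together with `q ≠ 0`, `v k ≠ 0`) on the
parameters: `1 + q² + ⋯ + q^{2N} ≠ 0` for `0 < N < n`, and `q^{2i} v_j ≠ v_k`
for `j ≠ k` and `-n < i < n`. -/
def SSParams (m n : ℕ) (q : ℂ) (v : Fin m → ℂ) : Prop :=
  (∀ N : ℕ, 0 < N → N < n → ∑ k ∈ Finset.range (N + 1), q ^ (2 * k) ≠ 0) ∧
  (∀ j k : Fin m, j ≠ k → ∀ i : ℤ, -(n : ℤ) < i → i < (n : ℤ) → q ^ (2 * i) * v j ≠ v k)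

/-- A subspace `W` is invariant under an endomorphism `f`. -/
def Invt {V : Type} [AddCommGroup V] [Module ℂ V] (f : Module.End ℂ V)
    (W : Submodule ℂ V) : Prop :=
  ∀ x ∈ W, f x ∈ W

/-- A `C`-representation of `H(m,1,n)`: the Jucys–Murphy elements `J_1,…,J_n`
act by diagonalizable operators, and for every `i = 1,…,n-1` the representation
space is completely reducible over the subalgebra generated by `J_i, J_{i+1}, σ_i`
(every invariant subspace has an invariant complement). -/
def IsCRep (m n : ℕ) (q : ℂ) (v : Fin m → ℂ) {V : Type} [AddCommGroup V] [Module ℂ V]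
    (ρ : CycHecke ℂ m n q q⁻¹ v →ₐ[ℂ] Module.End ℂ V) : Prop :=
  (∀ i < n, ⨆ μ : ℂ, (ρ (JM ℂ m n q q⁻¹ v i)).eigenspace μ = ⊤) ∧
  ∀ i : ℕ, i + 1 < n → ∀ W : Submodule ℂ V,
    Invt (ρ (JM ℂ m n q q⁻¹ v i)) W → Invt (ρ (JM ℂ m n q q⁻¹ v (i + 1))) W →
    Invt (ρ (sigN ℂ m n q q⁻¹ v i)) W →
    ∃ W' : Submodule ℂ V, IsCompl W W' ∧ Invt (ρ (JM ℂ m n q q⁻¹ v i)) W' ∧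
      Invt (ρ (JM ℂ m n q q⁻¹ v (i + 1))) W' ∧ Invt (ρ (sigN ℂ m n q q⁻¹ v i)) W'
/-- A standard Young `m`-tableau with `n` nodes, encoded as the map sending the
entry `i` (0-based: `i` stands for the number `i+1`) to its node `(k, r, s)`
(diagram `k`, row `r`, column `s`, all 0-based). The conditions: the filling is
injective, and for each node all nodes to its left in its row and all nodes
above it in its column are occupied by smaller entries. This holds if and only
if the occupied nodes form an `m`-tuple of Young diagrams of total size `n` and
the entries increase along the rows and columns of every diagram. -/
def IsStdTab (m n : ℕ) (T : Fin n → Fin m × ℕ × ℕ) : Prop :=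
  Function.Injective T ∧
  ∀ i : Fin n,
    (∀ s' < (T i).2.2, ∃ j : Fin n, j < i ∧ T j = ((T i).1, (T i).2.1, s')) ∧
    (∀ r' < (T i).2.1, ∃ j : Fin n, j < i ∧ T j = ((T i).1, r', (T i).2.2))

/-- The content `c(T|i) = v_k q^{2(s-r)}` of the node of `T` containing the
entry `i` (in row `r` and column `s` of the `k`-th diagram). -/
noncomputable def tabContent (m n : ℕ) (q : ℂ) (v : Fin m → ℂ)
    (T : Fin n → Fin m × ℕ × ℕ) (i : Fin n) : ℂ :=
  v (T i).1 * q ^ (2 * (((T i).2.2 : ℤ) - ((T i).2.1 : ℤ)))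
/-- The type of standard `m`-tableaux of shape `S` (where the shape is recorded
as the set `S` of occupied nodes). -/
def Tab (m n : ℕ) (S : Set (Fin m × ℕ × ℕ)) : Type :=
  {T : Fin n → Fin m × ℕ × ℕ // IsStdTab m n T ∧ Set.range T = S}

open Classical in
/-- A representation of `H(m,1,n)` on the vector space `V_λ` with basis the
standard `m`-tableaux of shape `S` is given by the formulas of the paper:
`τ · X = c(X|1) X` and
`σ_i · X = -(q-q⁻¹) c(X|i+1)/(c(X|i) - c(X|i+1)) X
          + (q c(X|i+1) - q⁻¹ c(X|i))/(c(X|i+1) - c(X|i)) X s_i`,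
where `X s_i` is `X` with the entries `i` and `i+1` exchanged, interpreted as
`0` if it is not standard. -/
def IsTabRep (m n : ℕ) (q : ℂ) (v : Fin m → ℂ) (S : Set (Fin m × ℕ × ℕ))
    (ρ : CycHecke ℂ m n q q⁻¹ v →ₐ[ℂ] Module.End ℂ (Tab m n S →₀ ℂ)) : Prop :=
  (∀ (T : Tab m n S) (h0 : 0 < n),
    ρ (tauH ℂ m n q q⁻¹ v) (Finsupp.single T 1) =
      tabContent m n q v T.1 ⟨0, h0⟩ • Finsupp.single T 1) ∧
  (∀ (T : Tab m n S) (i : ℕ) (h : i + 1 < n),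
    ρ (sigN ℂ m n q q⁻¹ v i) (Finsupp.single T 1) =
      (-((q - q⁻¹) * tabContent m n q v T.1 ⟨i + 1, h⟩ /
          (tabContent m n q v T.1 ⟨i, by omega⟩ - tabContent m n q v T.1 ⟨i + 1, h⟩))) •
        Finsupp.single T 1 +
      ((q * tabContent m n q v T.1 ⟨i + 1, h⟩ - q⁻¹ * tabContent m n q v T.1 ⟨i, by omega⟩) /
          (tabContent m n q v T.1 ⟨i + 1, h⟩ - tabContent m n q v T.1 ⟨i, by omega⟩)) •
        (if hstd : IsStdTab m n (T.1 ∘ Equiv.swap ⟨i, by omega⟩ ⟨i + 1, h⟩)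
         then Finsupp.single
            (⟨T.1 ∘ Equiv.swap ⟨i, by omega⟩ ⟨i + 1, h⟩, hstd, by
              rw [Set.range_comp, Equiv.range_eq_univ, Set.image_univ]
              exact T.2.2⟩ : Tab m n S) 1
         else 0))

theorem Fin.swap_lt_swap_of_lt {n i : ℕ} (h : i + 1 < n) {x y : Fin n} (hxy : x < y)
    (hne : ¬ ((x : ℕ) = i ∧ (y : ℕ) = i + 1)) :
    Equiv.swap (⟨i, by omega⟩ : Fin n) ⟨i + 1, h⟩ x <
      Equiv.swap (⟨i, by omega⟩ : Fin n) ⟨i + 1, h⟩ y := by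
  rw [Fin.lt_def] at hxy ⊢
  simp only [Equiv.swap_apply_def, Fin.ext_iff]
  split_ifs <;> simp_all <;> omega

namespace SSParams

variable {m n : ℕ} {q : ℂ} {v : Fin m → ℂ}

theorem sq_pow_ne_one (hss : SSParams m n q v) (hq2 : q ^ 2 ≠ 1) {k : ℕ} (hk0 : 0 < k)
    (hkn : k ≤ n) : (q ^ 2) ^ k ≠ 1 := by
  intro hk
  have hpos : 0 < orderOf (q ^ 2) := (isOfFinOrder_iff_pow_eq_one.mpr ⟨k, hk0, hk⟩).orderOf_pos
  have hle : orderOf (q ^ 2) ≤ k := orderOf_le_of_pow_eq_one hk0 hk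
  have hne : orderOf (q ^ 2) ≠ 1 := by rwa [Ne, orderOf_eq_one_iff]
  apply hss.1 (orderOf (q ^ 2) - 1) (by omega) (by omega)
  simp_rw [Nat.sub_add_cancel hpos, pow_mul]
  exact (IsPrimitiveRoot.orderOf (q ^ 2)).geom_sum_eq_zero (by omega)

theorem zpow_two_mul_ne_one (hss : SSParams m n q v) (hq2 : q ^ 2 ≠ 1) {d : ℤ} (hd0 : d ≠ 0)
    (hdn : |d| ≤ n) : q ^ (2 * d) ≠ 1 := by
  rw [zpow_mul, zpow_two]
  obtain ⟨k, rfl | rfl⟩ := d.eq_nat_or_neg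
  · rw [zpow_natCast, ← sq]
    exact hss.sq_pow_ne_one hq2 (by omega) (by simpa using hdn)
  · rw [zpow_neg, zpow_natCast, inv_ne_one, ← sq]
    exact hss.sq_pow_ne_one hq2 (by omega) (by simpa using hdn)

end SSParams

section Nodes

variable {m : ℕ}

def nodesLeftOf (p : Fin m × ℕ × ℕ) : Finset (Fin m × ℕ × ℕ) :=
  (Finset.range p.2.2).image fun s => (p.1, p.2.1, s)

def nodesAbove (p : Fin m × ℕ × ℕ) : Finset (Fin m × ℕ × ℕ) :=
  (Finset.range p.2.1).image fun r => (p.1, r, p.2.2)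

theorem card_nodesLeftOf (p : Fin m × ℕ × ℕ) : (nodesLeftOf p).card = p.2.2 := by
  rw [nodesLeftOf, Finset.card_image_of_injective _ fun x y h => by simpa using h,
    Finset.card_range]

theorem card_nodesAbove (p : Fin m × ℕ × ℕ) : (nodesAbove p).card = p.2.1 := by
  rw [nodesAbove, Finset.card_image_of_injective _ fun x y h => by simpa using h,
    Finset.card_range]

theorem nodesLeftOf_inter_nodesAbove_subset (p p' : Fin m × ℕ × ℕ) :
    nodesLeftOf p ∩ nodesAbove p' ⊆ {(p.1, p.2.1, p'.2.2)} := by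
  intro x hx
  simp only [Finset.mem_inter, nodesLeftOf, nodesAbove, Finset.mem_image] at hx
  obtain ⟨⟨s, -, rfl⟩, ⟨r, -, hr⟩⟩ := hx
  simp only [Prod.mk.injEq] at hr
  simp [hr.2.2]

theorem card_nodesLeftOf_inter_nodesAbove_le_one (p p' : Fin m × ℕ × ℕ) :
    (nodesLeftOf p ∩ nodesAbove p').card ≤ 1 :=
  (Finset.card_le_card (nodesLeftOf_inter_nodesAbove_subset p p')).trans
    (Finset.card_singleton _).le

theorem disjoint_nodesLeftOf_nodesAbove {p p' : Fin m × ℕ × ℕ} (h : p.1 ≠ p'.1) :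
    Disjoint (nodesLeftOf p) (nodesAbove p') := by
  simp only [Finset.disjoint_left, nodesLeftOf, nodesAbove, Finset.mem_image]
  rintro _ ⟨s, -, rfl⟩ ⟨r, -, hr⟩
  exact h (congrArg Prod.fst hr).symm

end Nodes

namespace IsStdTab

variable {m n : ℕ} {q : ℂ} {v : Fin m → ℂ} {T U : Fin n → Fin m × ℕ × ℕ}

theorem exists_le_apply_eq (hT : IsStdTab m n T) (t : Fin n) {a b : ℕ}
    (ha : a ≤ (T t).2.1) (hb : b ≤ (T t).2.2) :
    ∃ t' ≤ t, T t' = ((T t).1, a, b) := by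
  obtain ⟨t₁, ht₁, hTt₁⟩ : ∃ t₁ ≤ t, T t₁ = ((T t).1, a, (T t).2.2) := by
    rcases ha.lt_or_eq with ha | rfl
    · obtain ⟨t₁, ht₁, hTt₁⟩ := (hT.2 t).2 a ha
      exact ⟨t₁, ht₁.le, hTt₁⟩
    · exact ⟨t, le_rfl, rfl⟩
  rcases hb.lt_or_eq with hb | rfl
  · obtain ⟨t₂, ht₂, hTt₂⟩ := (hT.2 t₁).1 b (by rw [hTt₁]; exact hb)
    exact ⟨t₂, ht₂.le.trans ht₁, by rw [hTt₂, hTt₁]⟩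
  · exact ⟨t₁, ht₁, hTt₁⟩

theorem snd_apply_zero (hT : IsStdTab m n T) (h : 0 < n) : (T ⟨0, h⟩).2 = (0, 0) := by
  have hfirst : ∀ j : Fin n, ¬ j < ⟨0, h⟩ := fun j hj => Nat.not_lt_zero _ hj
  ext
  · by_contra hr
    obtain ⟨j, hj, -⟩ := (hT.2 ⟨0, h⟩).2 0 (Nat.pos_of_ne_zero hr)
    exact hfirst j hj
  · by_contra hs
    obtain ⟨j, hj, -⟩ := (hT.2 ⟨0, h⟩).1 0 (Nat.pos_of_ne_zero hs)
    exact hfirst j hj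

theorem comp_swap (hT : IsStdTab m n T) {i : ℕ} (h : i + 1 < n)
    (hdiag : (T ⟨i, by omega⟩).1 ≠ (T ⟨i + 1, h⟩).1) :
    IsStdTab m n (T ∘ Equiv.swap ⟨i, by omega⟩ ⟨i + 1, h⟩) := by
  set σ := Equiv.swap (⟨i, by omega⟩ : Fin n) ⟨i + 1, h⟩
  refine ⟨hT.1.comp σ.injective, fun x => ?_⟩
  have hlt : ∀ y, y < σ x → (T y).1 = (T (σ x)).1 → σ y < x := fun y hy hyx => by
    have := Fin.swap_lt_swap_of_lt h hy fun ⟨hyi, hxi⟩ => hdiag (by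
      rwa [show y = ⟨i, by omega⟩ from Fin.ext hyi,
        show σ x = ⟨i + 1, h⟩ from Fin.ext hxi] at hyx)
    rwa [Equiv.swap_apply_self] at this
  constructor
  · intro s' hs'
    obtain ⟨y, hy, hTy⟩ := (hT.2 (σ x)).1 s' hs'
    exact ⟨σ y, hlt y hy (by rw [hTy]), by simp [σ, hTy]⟩
  · intro r' hr'
    obtain ⟨y, hy, hTy⟩ := (hT.2 (σ x)).2 r' hr'
    exact ⟨σ y, hlt y hy (by rw [hTy]), by simp [σ, hTy]⟩

theorem nodesLeftOf_subset (hT : IsStdTab m n T) (t : Fin n) :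
    nodesLeftOf (T t) ⊆ (Finset.Iio t).image T := by
  intro x hx
  simp only [nodesLeftOf, Finset.mem_image, Finset.mem_range] at hx
  obtain ⟨s, hs, rfl⟩ := hx
  obtain ⟨t', ht', hTt'⟩ := (hT.2 t).1 s hs
  exact Finset.mem_image.mpr ⟨t', Finset.mem_Iio.mpr ht', hTt'⟩

theorem nodesAbove_subset (hT : IsStdTab m n T) (t : Fin n) :
    nodesAbove (T t) ⊆ (Finset.Iio t).image T := by
  intro x hx
  simp only [nodesAbove, Finset.mem_image, Finset.mem_range] at hx
  obtain ⟨r, hr, rfl⟩ := hx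
  obtain ⟨t', ht', hTt'⟩ := (hT.2 t).2 r hr
  exact Finset.mem_image.mpr ⟨t', Finset.mem_Iio.mpr ht', hTt'⟩

theorem col_add_row_le (hT : IsStdTab m n T) (hU : IsStdTab m n U) {t : Fin n}
    (hTU : ∀ t' < t, T t' = U t') :
    (T t).2.2 + (U t).2.1 ≤ t + (nodesLeftOf (T t) ∩ nodesAbove (U t)).card := by
  have himage : (Finset.Iio t).image U = (Finset.Iio t).image T :=
    Finset.image_congr fun t' ht' => (hTU t' (Finset.mem_Iio.mp ht')).symm
  have hunion : nodesLeftOf (T t) ∪ nodesAbove (U t) ⊆ (Finset.Iio t).image T :=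
    Finset.union_subset (hT.nodesLeftOf_subset t) (himage ▸ hU.nodesAbove_subset t)
  have hcard := Finset.card_union_add_card_inter (nodesLeftOf (T t)) (nodesAbove (U t))
  have hle := (Finset.card_le_card hunion).trans Finset.card_image_le
  rw [card_nodesLeftOf, card_nodesAbove] at hcard
  rw [Fin.card_Iio] at hle
  omega

theorem apply_eq_of_le (hT : Function.Injective T) (hU : IsStdTab m n U) {t : Fin n}
    (hTU : ∀ t' < t, T t' = U t') (hj : (T t).1 = (U t).1) (hr : (T t).2.1 ≤ (U t).2.1)
    (hs : (T t).2.2 ≤ (U t).2.2) : T t = U t := by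
  obtain ⟨t', ht', hUt'⟩ := hU.exists_le_apply_eq t hr hs
  rcases ht'.lt_or_eq with ht' | rfl
  · have : T t' = T t := by rw [hTU t' ht', hUt', ← hj]
    exact absurd (hT this) ht'.ne
  · rw [hUt', ← hj]

theorem apply_eq_of_tabContent_eq (hq : q ≠ 0) (hv : ∀ k, v k ≠ 0)
    (hss : SSParams m n q v) (hq2 : q ^ 2 ≠ 1) (hT : IsStdTab m n T) (hU : IsStdTab m n U)
    {t : Fin n} (hTU : ∀ t' < t, T t' = U t')
    (hc : tabContent m n q v T t = tabContent m n q v U t) : T t = U t := by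
  have hUT : ∀ t' < t, U t' = T t' := fun t' ht' => (hTU t' ht').symm
  have hbound := hT.col_add_row_le hU hTU
  have hbound' := hU.col_add_row_le hT hUT
  have ht := t.isLt
  have hshift : q ^ (2 * (((T t).2.2 - (T t).2.1 : ℤ) - ((U t).2.2 - (U t).2.1))) * v (T t).1 =
      v (U t).1 := by
    simp only [tabContent] at hc
    rw [mul_sub, zpow_sub₀ hq]
    field_simp
    linear_combination hc
  rcases eq_or_ne (T t).1 (U t).1 with hj | hj
  · by_contra hne
    have hdom : ¬ ((T t).2.1 ≤ (U t).2.1 ∧ (T t).2.2 ≤ (U t).2.2) := fun ⟨hr, hs⟩ =>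
      hne (apply_eq_of_le hT.1 hU hTU hj hr hs)
    have hdom' : ¬ ((U t).2.1 ≤ (T t).2.1 ∧ (U t).2.2 ≤ (T t).2.2) := fun ⟨hr, hs⟩ =>
      hne (apply_eq_of_le hU.1 hT hUT hj.symm hr hs).symm
    have := card_nodesLeftOf_inter_nodesAbove_le_one (T t) (U t)
    have := card_nodesLeftOf_inter_nodesAbove_le_one (U t) (T t)
    refine hss.zpow_two_mul_ne_one hq2
      (d := ((T t).2.2 - (T t).2.1 : ℤ) - ((U t).2.2 - (U t).2.1)) (by omega)
      (abs_le.mpr ⟨by omega, by omega⟩) ?_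
    rw [← hj] at hshift
    exact mul_right_cancel₀ (hv _) (hshift.trans (one_mul _).symm)
  · rw [Finset.disjoint_iff_inter_eq_empty.mp (disjoint_nodesLeftOf_nodesAbove hj),
      Finset.card_empty] at hbound
    rw [Finset.disjoint_iff_inter_eq_empty.mp (disjoint_nodesLeftOf_nodesAbove hj.symm),
      Finset.card_empty] at hbound'
    exact absurd hshift (hss.2 _ _ hj _ (by omega) (by omega))

theorem eq_of_tabContent_eq (hq : q ≠ 0) (hv : ∀ k, v k ≠ 0)
    (hss : SSParams m n q v) (hq2 : q ^ 2 ≠ 1) (hT : IsStdTab m n T) (hU : IsStdTab m n U)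
    (hc : ∀ t, tabContent m n q v T t = tabContent m n q v U t) : T = U :=
  funext fun t => Fin.strong_induction_on
    (fun t hTU => apply_eq_of_tabContent_eq hq hv hss hq2 hT hU hTU (hc t)) t

end IsStdTab

def Tab.comp {m n : ℕ} {S : Set (Fin m × ℕ × ℕ)} (X : Tab m n S) (σ : Equiv.Perm (Fin n))
    (h : IsStdTab m n (X.1 ∘ σ)) : Tab m n S :=
  ⟨X.1 ∘ σ, h, by rw [Set.range_comp, σ.range_eq_univ, Set.image_univ, X.2.2]⟩

@[simp]
theorem Tab.coe_comp {m n : ℕ} {S : Set (Fin m × ℕ × ℕ)} (X : Tab m n S)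
    (σ : Equiv.Perm (Fin n)) (h : IsStdTab m n (X.1 ∘ σ)) : (X.comp σ h).1 = X.1 ∘ σ :=
  rfl

theorem tabContent_of_sq_eq_one {m n : ℕ} {q : ℂ} (hq2 : q ^ 2 = 1) (v : Fin m → ℂ)
    (T : Fin n → Fin m × ℕ × ℕ) (i : Fin n) : tabContent m n q v T i = v (T i).1 := by
  rw [tabContent, zpow_mul, zpow_ofNat, hq2, one_zpow, mul_one]

theorem sigN_mul_self (R : Type) [CommRing R] (m n : ℕ) (q qinv : R) (v : Fin m → R) {i : ℕ}
    (hi : i + 1 < n) :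
    sigN R m n q qinv v i * sigN R m n q qinv v i = (q - qinv) • sigN R m n q qinv v i + 1 := by
  have hlt : i < n - 1 := by omega
  rw [sigN, dif_pos hlt, sigH, ← map_mul,
    RingQuot.mkAlgHom_rel R (cycRel.quadratic ⟨i, hlt⟩), map_add, map_one, map_smul]

theorem Finsupp.apply_eq_mul_of_forall_single {K α : Type*} [Field K]
    (g : Module.End K (α →₀ K)) (c : α → K)
    (hg : ∀ a, g (Finsupp.single a 1) = c a • Finsupp.single a 1) (z : α →₀ K) (a : α) :
    g z a = c a * z a := by
  classical
  induction z using Finsupp.induction_linear with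
  | zero => simp
  | add z₁ z₂ h₁ h₂ => rw [map_add, Finsupp.add_apply, Finsupp.add_apply, h₁, h₂, mul_add]
  | single b x =>
    rw [← mul_one x, ← smul_eq_mul, ← Finsupp.smul_single, map_smul, hg b]
    rcases eq_or_ne b a with rfl | hne
    · simp [mul_comm]
    · simp [Finsupp.single_eq_of_ne' hne]

theorem sigN_apply_sigN_apply {R M : Type} [CommRing R] [AddCommGroup M] [Module R M]
    {m n : ℕ} {q qinv : R} {v : Fin m → R}
    (ρ : CycHecke R m n q qinv v →ₐ[R] Module.End R M) {i : ℕ} (hi : i + 1 < n) (x : M) :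
    ρ (sigN R m n q qinv v i) (ρ (sigN R m n q qinv v i) x) =
      (q - qinv) • ρ (sigN R m n q qinv v i) x + x := by
  rw [← Module.End.mul_apply, ← map_mul, sigN_mul_self R m n q qinv v hi]
  simp

namespace IsTabRep

variable {m n : ℕ} {q : ℂ} {v : Fin m → ℂ} {S S' : Set (Fin m × ℕ × ℕ)}
  {ρ : CycHecke ℂ m n q q⁻¹ v →ₐ[ℂ] Module.End ℂ (Tab m n S →₀ ℂ)}
  {ρ' : CycHecke ℂ m n q q⁻¹ v →ₐ[ℂ] Module.End ℂ (Tab m n S' →₀ ℂ)}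

theorem sigN_apply_of_isStdTab (hρ : IsTabRep m n q v S ρ) (X Y : Tab m n S) {i : ℕ}
    (h : i + 1 < n) (hY : Y.1 = X.1 ∘ Equiv.swap ⟨i, by omega⟩ ⟨i + 1, h⟩) :
    ρ (sigN ℂ m n q q⁻¹ v i) (Finsupp.single X 1) =
      (-((q - q⁻¹) * tabContent m n q v X.1 ⟨i + 1, h⟩ /
          (tabContent m n q v X.1 ⟨i, by omega⟩ - tabContent m n q v X.1 ⟨i + 1, h⟩))) •
        Finsupp.single X 1 +
      ((q * tabContent m n q v X.1 ⟨i + 1, h⟩ - q⁻¹ * tabContent m n q v X.1 ⟨i, by omega⟩) /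
          (tabContent m n q v X.1 ⟨i + 1, h⟩ - tabContent m n q v X.1 ⟨i, by omega⟩)) •
        Finsupp.single Y 1 := by
  rw [hρ.2 X i h, dif_pos (hY ▸ Y.2.1)]
  congr 3
  exact Subtype.ext hY.symm

theorem sigN_apply_of_not_isStdTab (hρ : IsTabRep m n q v S ρ) (X : Tab m n S) {i : ℕ}
    (h : i + 1 < n) (hX : ¬ IsStdTab m n (X.1 ∘ Equiv.swap ⟨i, by omega⟩ ⟨i + 1, h⟩)) :
    ρ (sigN ℂ m n q q⁻¹ v i) (Finsupp.single X 1) =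
      (-((q - q⁻¹) * tabContent m n q v X.1 ⟨i + 1, h⟩ /
          (tabContent m n q v X.1 ⟨i, by omega⟩ - tabContent m n q v X.1 ⟨i + 1, h⟩))) •
        Finsupp.single X 1 := by
  rw [hρ.2 X i h, dif_neg hX]
  erw [smul_zero, add_zero]

theorem tabContent_ne (hρ : IsTabRep m n q v S ρ) (X : Tab m n S) {i : ℕ} (h : i + 1 < n) :
    tabContent m n q v X.1 ⟨i, by omega⟩ ≠ tabContent m n q v X.1 ⟨i + 1, h⟩ := by
  intro heq
  have hzero : ρ (sigN ℂ m n q q⁻¹ v i) (Finsupp.single X 1) = 0 := by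
    rw [hρ.2 X i h, heq, sub_self, div_zero, div_zero, neg_zero]
    erw [zero_smul, zero_smul, add_zero]
  have := sigN_apply_sigN_apply ρ h (Finsupp.single X 1)
  rw [hzero, map_zero, smul_zero, zero_add] at this
  exact one_ne_zero (Finsupp.single_eq_zero.mp this.symm)

theorem JM_succ_apply (hq : q ≠ 0) (hρ : IsTabRep m n q v S ρ) {k : ℕ} (hk : k + 1 < n)
    (hJ : ∀ Y : Tab m n S, ρ (JM ℂ m n q q⁻¹ v k) (Finsupp.single Y 1) =
      tabContent m n q v Y.1 ⟨k, by omega⟩ • Finsupp.single Y 1)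
    (X : Tab m n S) :
    ρ (JM ℂ m n q q⁻¹ v (k + 1)) (Finsupp.single X 1) =
      tabContent m n q v X.1 ⟨k + 1, hk⟩ • Finsupp.single X 1 := by
  have hne := hρ.tabContent_ne X hk
  have hsub : tabContent m n q v X.1 ⟨k, by omega⟩ - tabContent m n q v X.1 ⟨k + 1, hk⟩ ≠ 0 :=
    sub_ne_zero.mpr hne
  have hsub' : tabContent m n q v X.1 ⟨k + 1, hk⟩ - tabContent m n q v X.1 ⟨k, by omega⟩ ≠ 0 :=
    sub_ne_zero.mpr hne.symm
  show ρ (sigN ℂ m n q q⁻¹ v k * JM ℂ m n q q⁻¹ v k * sigN ℂ m n q q⁻¹ v k) _ = _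
  simp only [map_mul, Module.End.mul_apply]
  by_cases hstd : IsStdTab m n (X.1 ∘ Equiv.swap ⟨k, by omega⟩ ⟨k + 1, hk⟩)
  · set Y := X.comp _ hstd
    have hXY : X.1 = Y.1 ∘ Equiv.swap ⟨k, by omega⟩ ⟨k + 1, hk⟩ := by
      ext1 x; simp [Y]
    have hYk : tabContent m n q v Y.1 ⟨k, by omega⟩ = tabContent m n q v X.1 ⟨k + 1, hk⟩ := by
      simp [tabContent, Y]
    have hYk' : tabContent m n q v Y.1 ⟨k + 1, hk⟩ = tabContent m n q v X.1 ⟨k, by omega⟩ := by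
      simp [tabContent, Y]
    have hσX := hρ.sigN_apply_of_isStdTab X Y hk rfl
    have hσY := hρ.sigN_apply_of_isStdTab Y X hk hXY
    rw [hYk, hYk'] at hσY
    rw [hσX]
    simp only [map_add, map_smul]
    rw [hJ X, hJ Y, hYk]
    simp only [map_smul]
    rw [hσX, hσY]
    match_scalars
    · field_simp
      ring
    · field_simp
      ring
  · have hσX := hρ.sigN_apply_of_not_isStdTab X hk hstd
    have hquad := sigN_apply_sigN_apply ρ hk (Finsupp.single X 1)
    rw [hσX, map_smul, hσX] at hquad
    have hcoeff := congrArg (fun g : Tab m n S →₀ ℂ => g X) hquad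
    simp only [Finsupp.smul_apply, Finsupp.add_apply, Finsupp.single_eq_same,
      smul_eq_mul, mul_one] at hcoeff
    rw [hσX]
    simp only [map_smul]
    rw [hJ X]
    simp only [map_smul]
    rw [hσX]
    match_scalars
    set c := tabContent m n q v X.1 ⟨k, by omega⟩
    set c' := tabContent m n q v X.1 ⟨k + 1, hk⟩
    set α := -((q - q⁻¹) * c' / (c - c'))
    have hα : α * (c - c') = -((q - q⁻¹) * c') := by
      rw [neg_mul, div_mul_cancel₀ _ hsub]
    linear_combination c' * hcoeff + α * hα

theorem JM_apply (hq : q ≠ 0) (hρ : IsTabRep m n q v S ρ) {k : ℕ} (hk : k < n)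
    (X : Tab m n S) :
    ρ (JM ℂ m n q q⁻¹ v k) (Finsupp.single X 1) =
      tabContent m n q v X.1 ⟨k, hk⟩ • Finsupp.single X 1 := by
  induction k generalizing X with
  | zero => exact hρ.1 X hk
  | succ k ih => exact hρ.JM_succ_apply hq hk (ih (by omega)) X

theorem tabContent_eq_of_intertwines (hq : q ≠ 0) (hρ : IsTabRep m n q v S ρ)
    (hρ' : IsTabRep m n q v S' ρ') (f : (Tab m n S →₀ ℂ) →ₗ[ℂ] (Tab m n S' →₀ ℂ))
    (hf : ∀ a x, f (ρ a x) = ρ' a (f x)) {X : Tab m n S} {Y : Tab m n S'}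
    (hXY : f (Finsupp.single X 1) Y ≠ 0) (t : Fin n) :
    tabContent m n q v Y.1 t = tabContent m n q v X.1 t := by
  have h := congrArg (· Y) (hf (JM ℂ m n q q⁻¹ v t) (Finsupp.single X 1))
  simp only [hρ.JM_apply hq t.isLt X, map_smul, Finsupp.smul_apply, smul_eq_mul,
    Finsupp.apply_eq_mul_of_forall_single _ _ (hρ'.JM_apply hq t.isLt)] at h
  exact mul_right_cancel₀ hXY h.symm

theorem snd_eq_of_sq_eq_one (hρ : IsTabRep m n q v S ρ) (hq2 : q ^ 2 = 1) (X : Tab m n S)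
    (t : Fin n) : (X.1 t).2 = (0, 0) := by
  have hdiag : ∀ (Y : Tab m n S) {i : ℕ} (h : i + 1 < n),
      (Y.1 ⟨i, by omega⟩).1 ≠ (Y.1 ⟨i + 1, h⟩).1 := fun Y i h hY =>
    hρ.tabContent_ne Y h (by simp only [tabContent_of_sq_eq_one hq2, hY])
  have hfront : ∀ k (hk : k < n) (Y : Tab m n S), ∃ Z : Tab m n S,
      Z.1 ⟨0, by omega⟩ = Y.1 ⟨k, hk⟩ := by
    intro k
    induction k with
    | zero => exact fun _ Y => ⟨Y, rfl⟩
    | succ k ih =>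
      intro hk Y
      obtain ⟨Z, hZ⟩ := ih (by omega) (Y.comp _ (Y.2.1.comp_swap hk (hdiag Y hk)))
      exact ⟨Z, by simp [hZ]⟩
  obtain ⟨Z, hZ⟩ := hfront t t.isLt X
  rw [← hZ]
  exact Z.2.1.snd_apply_zero _

theorem val_eq_of_tabContent_eq (hq : q ≠ 0) (hv : ∀ k, v k ≠ 0) (hss : SSParams m n q v)
    (hρ : IsTabRep m n q v S ρ) (hρ' : IsTabRep m n q v S' ρ') (X : Tab m n S)
    (Y : Tab m n S') (hc : ∀ t, tabContent m n q v X.1 t = tabContent m n q v Y.1 t) :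
    X.1 = Y.1 := by
  by_cases hq2 : q ^ 2 = 1
  · funext t
    have hj : (X.1 t).1 = (Y.1 t).1 := by
      have hn := t.pos
      by_contra hj
      apply hss.2 _ _ hj 0 (by omega) (by omega)
      simpa [tabContent_of_sq_eq_one hq2] using hc t
    exact Prod.ext hj
      ((hρ.snd_eq_of_sq_eq_one hq2 X t).trans (hρ'.snd_eq_of_sq_eq_one hq2 Y t).symm)
  · exact IsStdTab.eq_of_tabContent_eq hq hv hss hq2 X.2.1 Y.2.1 hc

end IsTabRep

theorem tab_rep_not_isomorphic_general (m n : ℕ)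
    (q : ℂ) (hq : q ≠ 0) (v : Fin m → ℂ) (hv : ∀ k, v k ≠ 0) (hss : SSParams m n q v)
    (S S' : Set (Fin m × ℕ × ℕ)) (hSS' : S ≠ S')
    (hS : ∃ T, IsStdTab m n T ∧ Set.range T = S)
    (ρ : CycHecke ℂ m n q q⁻¹ v →ₐ[ℂ] Module.End ℂ (Tab m n S →₀ ℂ))
    (hρ : IsTabRep m n q v S ρ)
    (ρ' : CycHecke ℂ m n q q⁻¹ v →ₐ[ℂ] Module.End ℂ (Tab m n S' →₀ ℂ))
    (hρ' : IsTabRep m n q v S' ρ') :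
    ¬ ∃ f : (Tab m n S →₀ ℂ) ≃ₗ[ℂ] (Tab m n S' →₀ ℂ),
        ∀ (a : CycHecke ℂ m n q q⁻¹ v) (x : Tab m n S →₀ ℂ),
          f (ρ a x) = ρ' a (f x) := by
  rintro ⟨f, hf⟩
  obtain ⟨T, hT, hTS⟩ := hS
  let X : Tab m n S := ⟨T, hT, hTS⟩
  obtain ⟨Y, hY⟩ : (f (Finsupp.single X 1)).support.Nonempty :=
    Finsupp.support_nonempty_iff.mpr
      (f.map_ne_zero_iff.mpr (Finsupp.single_ne_zero.mpr one_ne_zero))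
  have hc := hρ.tabContent_eq_of_intertwines hq hρ' f.toLinearMap hf
    (Finsupp.mem_support_iff.mp hY)
  have hXY := hρ.val_eq_of_tabContent_eq hq hv hss hρ' X Y fun t => (hc t).symm
  exact hSS' (by rw [← X.2.2, ← Y.2.2, hXY])

/-- If `λ ≠ μ` are distinct `m`-partitions of length `n`
(encoded by their sets of nodes `S ≠ S'`), then the representations `V_λ` and
`V_μ` of `H(m,1,n)` are not isomorphic as `H(m,1,n)`-modules: there is no
linear equivalence intertwining the two actions. -/
theorem tab_rep_not_isomorphic (m n : ℕ) (hn : 0 < n)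
    (q : ℂ) (hq : q ≠ 0) (v : Fin m → ℂ) (hv : ∀ k, v k ≠ 0) (hss : SSParams m n q v)
    (S S' : Set (Fin m × ℕ × ℕ)) (hSS' : S ≠ S')
    (hS : ∃ T, IsStdTab m n T ∧ Set.range T = S)
    (hS' : ∃ T, IsStdTab m n T ∧ Set.range T = S')
    (ρ : CycHecke ℂ m n q q⁻¹ v →ₐ[ℂ] Module.End ℂ (Tab m n S →₀ ℂ))
    (hρ : IsTabRep m n q v S ρ)
    (ρ' : CycHecke ℂ m n q q⁻¹ v →ₐ[ℂ] Module.End ℂ (Tab m n S' →₀ ℂ))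
    (hρ' : IsTabRep m n q v S' ρ') :
    ¬ ∃ f : (Tab m n S →₀ ℂ) ≃ₗ[ℂ] (Tab m n S' →₀ ℂ),
        ∀ (a : CycHecke ℂ m n q q⁻¹ v) (x : Tab m n S →₀ ℂ),
          f (ρ a x) = ρ' a (f x) :=
  tab_rep_not_isomorphic_general m n q hq v hv hss S S' hSS' hS ρ hρ ρ' hρ'
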